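/- Let p ≥ 1 and α_1,…,α_p ∈ [0,1] with α_p > 0, let r = ρ(A), and let Π = u vᵀ with u, v the explicit right and left Perron eigenvectors of the companion matrix A normalized so that Σ_i u_i = 1 and uᵀv = 1. Then e₁ᵀ Π e₁ = r^{p−1}/φ′(r), where e₁ is the first standard basis vector of ℝ^p and φ′ is the derivative of the characteristic polynomial φ of A. -/

import Mathlib

open Matrix Polynomial

noncomputable section

/-- The companion matrix with first row `(α_1, …, α_p)` and subdiagonal entries `1`. -/
def companion (p : ℕ) (α : Fin p → ℝ) : Matrix (Fin p) (Fin p) ℝ :=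
  Matrix.of fun i j => if (i : ℕ) = 0 then α j else if (i : ℕ) = (j : ℕ) + 1 then 1 else 0

/-- `φ(λ) = λ^p − α_1 λ^{p−1} − ⋯ − α_p`, where `α i` (0-indexed) is `α_{i+1}`. -/
def phiPoly (p : ℕ) (α : Fin p → ℝ) : Polynomial ℝ :=
  X ^ p - ∑ k : Fin p, C (α k) * X ^ (p - 1 - (k : ℕ))

/-- The spectral radius of a real matrix: the maximum (supremum) of the moduli of its
complex eigenvalues. -/
def specRad {p : ℕ} (A : Matrix (Fin p) (Fin p) ℝ) : ℝ :=
  sSup {r : ℝ | ∃ z ∈ spectrum ℂ (A.map (Complex.ofReal : ℝ → ℂ)), ‖z‖ = r}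

/-- The right Perron vector (0-based indices). -/
def perronU (p : ℕ) (r : ℝ) : Fin p → ℝ :=
  fun i => r ^ (-(i : ℤ)) / ∑ k : Fin p, r ^ (-(k : ℤ))

/-- The left Perron vector (0-based indices). -/
def perronV (p : ℕ) (α : Fin p → ℝ) (r : ℝ) : Fin p → ℝ :=
  fun i => (∑ k : Fin p, r ^ (-(k : ℤ))) /
      (∑ k : Fin p, ((k : ℕ) + 1 : ℝ) * α k * r ^ (-((k : ℕ) + 1 : ℤ))) *
      ∑ ℓ ∈ Finset.univ.filter (fun ℓ : Fin p => i ≤ ℓ),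
        α ℓ * r ^ ((i : ℤ) - (ℓ : ℤ) - 1)

/-!
Writing `x = 1 / r`, the equation `φ(r) = 0` becomes `∑ α_k x^k = 1`, whose left side is strictly
increasing on `[0, ∞)` and unbounded because `α_p > 0`; let `r > 0` be the reciprocal of its
solution. Every nonzero complex root `z` of `φ` satisfies `∑ α_k |z|^{-k} ≥ 1`, so `|z| ≤ r`, and
the eigenvalues of `A` are exactly the roots of `φ`: hence `ρ(A) = r`. At this root
`u_1 v_1 = 1 / ∑ k α_k r^{-k}`, while
`r φ'(r) = p r^p - ∑ (p - k) α_k r^{p-k} = r^p ∑ k α_k r^{-k}`.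
-/

theorem Matrix.mem_spectrum_iff_exists_mulVec_eq_smul {n K : Type*} [Fintype n] [DecidableEq n]
    [Field K] (M : Matrix n n K) (z : K) :
    z ∈ spectrum K M ↔ ∃ v ≠ 0, M *ᵥ v = z • v := by
  rw [← Matrix.spectrum_toLin', ← Module.End.hasEigenvalue_iff_mem_spectrum]
  constructor
  · intro h
    obtain ⟨v, hv⟩ := h.exists_hasEigenvector
    exact ⟨v, hv.2, by simpa using hv.apply_eq_smul⟩
  · rintro ⟨v, hv0, hv⟩
    exact Module.End.hasEigenvalue_of_hasEigenvector
      ⟨Module.End.mem_eigenspace_iff.2 (by simpa using hv), hv0⟩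

theorem zpow_neg_natCast_succ {M : Type*} [DivisionMonoid M] (a : M) (k : ℕ) :
    a ^ (-((k : ℤ) + 1)) = a⁻¹ ^ (k + 1) := by
  rw [← _root_.inv_zpow', ← Nat.cast_succ, zpow_natCast]

theorem sum_mul_pow_sub_one_sub_eq_pow_mul {K : Type*} [Field K] {p : ℕ} (a : Fin p → K) {t : K}
    (ht : t ≠ 0) :
    ∑ k : Fin p, a k * t ^ (p - 1 - k) = t ^ p * ∑ k : Fin p, a k * t⁻¹ ^ ((k : ℕ) + 1) := by
  rw [Finset.mul_sum]
  refine Finset.sum_congr rfl fun k _ => ?_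
  rw [mul_left_comm, inv_pow, ← pow_sub₀ _ ht (by omega)]
  congr 2
  omega

theorem natCast_mul_pow_sub_one_sub_sub_one {K : Type*} [Field K] {r : K} (hr : r ≠ 0)
    {n k : ℕ} (hk : k < n) :
    ((n - 1 - k : ℕ) : K) * r ^ (n - 1 - k - 1) =
      (n - (k + 1)) * (r ^ (n - 1) * r⁻¹ ^ (k + 1)) := by
  obtain rfl | hlt := Nat.succ_le_of_lt hk |>.eq_or_lt
  · simp
  · rw [show n - 1 - k = n - (k + 1) by omega, Nat.cast_sub hlt.le, inv_pow,
      ← pow_sub₀ _ hr (by omega)]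
    congr 1
    · push_cast; ring
    · congr 1; omega

section Companion

variable {p : ℕ} (α : Fin p → ℝ)

theorem companion_map_mulVec_apply (v : Fin p → ℂ) (i : Fin p) :
    ((companion p α).map Complex.ofReal *ᵥ v) i =
      if (i : ℕ) = 0 then ∑ j, (α j : ℂ) * v j else v ⟨i - 1, by omega⟩ := by
  split_ifs with h
  · simp [companion, mulVec, dotProduct, h]
  · rw [mulVec, dotProduct, Finset.sum_eq_single ⟨i - 1, by omega⟩]
    · simp [companion, h, Nat.sub_add_cancel (Nat.pos_of_ne_zero h)]
    · intro j _ hj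
      have : (i : ℕ) ≠ j + 1 := fun h' => hj (Fin.ext (by simp only; omega))
      simp [companion, h, this]
    · simp

/-- Eigenvectors of the companion matrix are multiples of `(z ^ (p - 1), …, z, 1)`. -/
theorem mem_spectrum_companion_iff (hp : 0 < p) (z : ℂ) :
    z ∈ spectrum ℂ ((companion p α).map Complex.ofReal) ↔
      z ^ p = ∑ k : Fin p, (α k : ℂ) * z ^ (p - 1 - k) := by
  rw [Matrix.mem_spectrum_iff_exists_mulVec_eq_smul]
  set last : Fin p := ⟨p - 1, by omega⟩
  constructor
  · rintro ⟨v, hv0, heig⟩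
    have hshift : ∀ n (hn : n + 1 < p), v ⟨n, by omega⟩ = z * v ⟨n + 1, hn⟩ := fun n hn => by
      simpa [companion_map_mulVec_apply] using congrFun heig ⟨n + 1, hn⟩
    have hpow : ∀ d n (hn : n + d = p - 1), v ⟨n, by omega⟩ = z ^ d * v last := by
      intro d
      induction d with
      | zero => intro n hn; simp [last, ← hn]
      | succ d ih => intro n hn; rw [hshift n (by omega), ih (n + 1) (by omega), pow_succ']; ring
    have hv : ∀ j : Fin p, v j = z ^ (p - 1 - j) * v last := fun j => hpow _ j (by omega)
    have hlast : v last ≠ 0 := fun h => hv0 (funext fun j => by simp [hv j, h])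
    have hrow : ∑ j, (α j : ℂ) * v j = z * v ⟨0, hp⟩ := by
      simpa [companion_map_mulVec_apply] using congrFun heig ⟨0, hp⟩
    refine mul_right_cancel₀ hlast ?_
    calc z ^ p * v last = z * v ⟨0, hp⟩ := by
          rw [hv ⟨0, hp⟩, ← mul_assoc, ← pow_succ', Nat.sub_zero, Nat.sub_add_cancel hp]
      _ = ∑ j, (α j : ℂ) * v j := hrow.symm
      _ = _ := by rw [Finset.sum_mul]; exact Finset.sum_congr rfl fun j _ => by rw [hv j]; ring
  · intro hz
    refine ⟨fun j => z ^ (p - 1 - j), fun h => by simpa [last] using congrFun h last, ?_⟩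
    funext i
    rw [companion_map_mulVec_apply]
    split_ifs with h
    · simp only [Pi.smul_apply, smul_eq_mul, h, ← pow_succ', ← hz]
      congr 1; omega
    · simp only [Pi.smul_apply, smul_eq_mul, ← pow_succ']
      congr 1; omega

end Companion

section PerronRoot

variable {p : ℕ} {α : Fin p → ℝ}

theorem strictMonoOn_sum_mul_pow_succ (hα : ∀ k, 0 ≤ α k) (hpos : ∃ k, 0 < α k) :
    StrictMonoOn (fun x : ℝ => ∑ k : Fin p, α k * x ^ ((k : ℕ) + 1)) (Set.Ici 0) := by
  intro s hs t _ hst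
  obtain ⟨j, hj⟩ := hpos
  refine Finset.sum_lt_sum (fun k _ => ?_) ⟨j, Finset.mem_univ _, ?_⟩
  · exact mul_le_mul_of_nonneg_left (pow_le_pow_left₀ hs hst.le _) (hα k)
  · exact mul_lt_mul_of_pos_left (pow_lt_pow_left₀ hst hs (by omega)) hj

theorem exists_pos_sum_mul_pow_succ_eq_one (hα : ∀ k, 0 ≤ α k) {j : Fin p} (hj : 0 < α j) :
    ∃ x : ℝ, 0 < x ∧ ∑ k : Fin p, α k * x ^ ((k : ℕ) + 1) = 1 := by
  set b := max 1 (α j)⁻¹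
  have hb : 1 ≤ b := le_max_left _ _
  have hjb : 1 ≤ α j * b ^ ((j : ℕ) + 1) :=
    calc 1 = α j * (α j)⁻¹ := (mul_inv_cancel₀ hj.ne').symm
      _ ≤ α j * b := mul_le_mul_of_nonneg_left (le_max_right _ _) hj.le
      _ ≤ α j * b ^ ((j : ℕ) + 1) :=
        mul_le_mul_of_nonneg_left (le_self_pow₀ hb (by omega)) hj.le
  have hb1 : 1 ≤ ∑ k : Fin p, α k * b ^ ((k : ℕ) + 1) :=
    hjb.trans (Finset.single_le_sum (f := fun k : Fin p => α k * b ^ ((k : ℕ) + 1))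
      (fun k _ => mul_nonneg (hα k) (by positivity)) (Finset.mem_univ j))
  obtain ⟨x, hx, hx1⟩ := intermediate_value_Icc (zero_le_one.trans hb)
    (by fun_prop : Continuous fun x : ℝ => ∑ k : Fin p, α k * x ^ ((k : ℕ) + 1)).continuousOn
    (⟨by simp, hb1⟩ : (1 : ℝ) ∈ Set.Icc _ _)
  refine ⟨x, hx.1.lt_of_ne ?_, hx1⟩
  rintro rfl
  simp at hx1

end PerronRoot

theorem specRad_companion_eq {p : ℕ} {α : Fin p → ℝ} (hα : ∀ k, 0 ≤ α k) {r : ℝ} (hr : 0 < r)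
    (hroot : ∑ k : Fin p, α k * r⁻¹ ^ ((k : ℕ) + 1) = 1) :
    specRad (companion p α) = r := by
  have hp : 0 < p := Nat.pos_of_ne_zero (by rintro rfl; simp at hroot)
  have hpos : ∃ k, 0 < α k := by
    by_contra! h
    simp [le_antisymm (h _) (hα _)] at hroot
  set S := {s : ℝ | ∃ z ∈ spectrum ℂ ((companion p α).map Complex.ofReal), ‖z‖ = s}
  have hrS : r ∈ S := by
    refine ⟨r, ?_, by simp [hr.le]⟩
    rw [mem_spectrum_companion_iff α hp]
    exact_mod_cast by rw [sum_mul_pow_sub_one_sub_eq_pow_mul α hr.ne', hroot, mul_one]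
  have hS : ∀ s ∈ S, s ≤ r := by
    rintro _ ⟨z, hz, rfl⟩
    rw [mem_spectrum_companion_iff α hp] at hz
    rcases (norm_nonneg z).eq_or_lt with hz0 | hz0
    · rw [← hz0]; exact hr.le
    have hle : ‖z‖ ^ p ≤ ‖z‖ ^ p * ∑ k : Fin p, α k * ‖z‖⁻¹ ^ ((k : ℕ) + 1) :=
      calc ‖z‖ ^ p = ‖∑ k : Fin p, (α k : ℂ) * z ^ (p - 1 - k)‖ := by rw [← hz, norm_pow]
        _ ≤ ∑ k : Fin p, α k * ‖z‖ ^ (p - 1 - k) := (norm_sum_le _ _).trans_eq <|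
          Finset.sum_congr rfl fun k _ => by simp [abs_of_nonneg (hα k)]
        _ = _ := sum_mul_pow_sub_one_sub_eq_pow_mul α hz0.ne'
    have h1 : 1 ≤ ∑ k : Fin p, α k * ‖z‖⁻¹ ^ ((k : ℕ) + 1) :=
      (le_mul_iff_one_le_right (pow_pos hz0 p)).1 hle
    by_contra! hrz
    have hlt := strictMonoOn_sum_mul_pow_succ hα hpos (inv_nonneg.2 hz0.le) (inv_nonneg.2 hr.le)
      (inv_strictAnti₀ hr hrz)
    simp only [hroot] at hlt
    linarith
  exact le_antisymm (csSup_le ⟨r, hrS⟩ hS) (le_csSup ⟨r, hS⟩ hrS)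

section PerronVectors

variable {p : ℕ} (α : Fin p → ℝ) {r : ℝ}

theorem vecMulVec_perronU_perronV_zero (hp : 0 < p) (hr : 0 < r)
    (hroot : ∑ k : Fin p, α k * r⁻¹ ^ ((k : ℕ) + 1) = 1) :
    vecMulVec (perronU p r) (perronV p α r) ⟨0, hp⟩ ⟨0, hp⟩ =
      (∑ k : Fin p, ((k : ℕ) + 1 : ℝ) * α k * r ^ (-((k : ℕ) + 1 : ℤ)))⁻¹ := by
  have hS : 0 < ∑ k : Fin p, r ^ (-(k : ℤ)) :=
    Finset.sum_pos (fun k _ => zpow_pos hr _) ⟨⟨0, hp⟩, Finset.mem_univ _⟩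
  have hT : ∑ ℓ ∈ Finset.univ.filter (fun ℓ : Fin p => ⟨0, hp⟩ ≤ ℓ),
      α ℓ * r ^ (((⟨0, hp⟩ : Fin p) : ℤ) - ℓ - 1) = 1 := by
    rw [Finset.filter_true_of_mem fun ℓ _ => Fin.mk_le_of_le_val (Nat.zero_le _), ← hroot]
    refine Finset.sum_congr rfl fun k _ => ?_
    rw [← zpow_neg_natCast_succ]
    congr 2
    push_cast
    ring
  rw [vecMulVec_apply, perronU, perronV, hT, Fin.val_mk, Nat.cast_zero, neg_zero, zpow_zero]
  field_simp

theorem phiPoly_derivative_eval (r : ℝ) :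
    (phiPoly p α).derivative.eval r =
      p * r ^ (p - 1) - ∑ k : Fin p, α k * ((p - 1 - k : ℕ) * r ^ (p - 1 - k - 1)) := by
  simp [phiPoly, derivative_X_pow, eval_finsetSum]

theorem phiPoly_derivative_eval_of_sum_eq_one (hr : r ≠ 0)
    (hroot : ∑ k : Fin p, α k * r⁻¹ ^ ((k : ℕ) + 1) = 1) :
    (phiPoly p α).derivative.eval r =
      r ^ (p - 1) * ∑ k : Fin p, ((k : ℕ) + 1 : ℝ) * α k * r ^ (-((k : ℕ) + 1 : ℤ)) := by
  simp_rw [phiPoly_derivative_eval, fun k : Fin p => natCast_mul_pow_sub_one_sub_sub_one hr k.isLt,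
    zpow_neg_natCast_succ]
  calc _ = p * r ^ (p - 1) * ∑ k : Fin p, α k * r⁻¹ ^ ((k : ℕ) + 1) - _ := by rw [hroot, mul_one]
    _ = _ := by
      rw [Finset.mul_sum, Finset.mul_sum, ← Finset.sum_sub_distrib]
      exact Finset.sum_congr rfl fun k _ => by ring

end PerronVectors

/-- with `Π = u vᵀ`, one has `e₁ᵀ Π e₁ = ρ(A)^{p−1} / φ′(ρ(A))`. -/
theorem e1_perron_projection_e1
    (p : ℕ) (hp : 0 < p) (α : Fin p → ℝ)
    (hα : ∀ i, α i ∈ Set.Icc (0 : ℝ) 1)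
    (hαp : 0 < α ⟨p - 1, by omega⟩) :
    (Matrix.vecMulVec (perronU p (specRad (companion p α)))
        (perronV p α (specRad (companion p α)))) ⟨0, hp⟩ ⟨0, hp⟩
      = specRad (companion p α) ^ (p - 1) /
        (phiPoly p α).derivative.eval (specRad (companion p α)) := by
  have hα0 : ∀ k, 0 ≤ α k := fun k => (hα k).1
  obtain ⟨x, hx, hroot⟩ := exists_pos_sum_mul_pow_succ_eq_one hα0 hαp
  rw [← inv_inv x] at hroot
  have hr : 0 < x⁻¹ := inv_pos.2 hx
  rw [specRad_companion_eq hα0 hr hroot, vecMulVec_perronU_perronV_zero α hp hr hroot,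
    phiPoly_derivative_eval_of_sum_eq_one α hr.ne' hroot, div_mul_cancel_left₀ (by positivity)]

end
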